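/- Fix an even integer n ≥ 2, and let L be the subgroup of ℤ^n generated by the vectors e_i − e_{i+2} (1 ≤ i ≤ n−2) together with e_{n−1} and 2e_n. Then e_2 ∉ L, while 2e_1 ∈ L. (In root-theoretic terms: for n even, the lattice ℤ(S_0^+ ∪ {2α_n}) does not contain the root ᾱ_0 + α_1 = −e_2, but it does contain 2ᾱ_0 = −2e_1.) -/
import Mathlib

/-- The "parity of odd-coordinate sum" homomorphism. -/
def oddSumHom (n : ℕ) : (Fin n → ℤ) →+ ZMod 2 where
  toFun v := ((∑ i ∈ Finset.univ.filter (fun i : Fin n => i.1 % 2 = 1), v i : ℤ) : ZMod 2)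
  map_zero' := by simp
  map_add' v w := by
    rw [← Int.cast_add, ← Finset.sum_add_distrib]
    rfl

lemma oddSumHom_single (n : ℕ) (a : Fin n) :
    oddSumHom n (Pi.single a (1 : ℤ)) = if a.1 % 2 = 1 then 1 else 0 := by
  simp only [oddSumHom, AddMonoidHom.coe_mk, ZeroHom.coe_mk, Pi.single_apply,
    Finset.sum_ite_eq', Finset.mem_filter, Finset.mem_univ, true_and]
  split <;> simp

/-- Case `D_{n+1}^{(2)}`, `n` even, in the realization of `B_n` in `ℤ^n` with simple
roots `α_i = e_i − e_{i+1}` (`1 ≤ i ≤ n-1`) and `α_n = e_n`: the lattice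
`L = ℤ(S_0^+ ∪ {2α_n})`, generated by the vectors `e_i − e_{i+2}` (`1 ≤ i ≤ n-2`)
together with `e_{n-1}` and `2e_n`, does not contain `e_2` (equivalently, does not
contain `ᾱ_0 + α_1 = −e_2`), but contains `2e_1` (equivalently, `2ᾱ_0 = −2e_1`). -/
theorem lattice_Dn2_even_not_contains
    (n : ℕ) (hn : 2 ≤ n) (heven : Even n)
    (L : AddSubgroup (Fin n → ℤ))
    (hL : L = AddSubgroup.closure
      ({v : Fin n → ℤ | ∃ (j : ℕ) (h : j + 2 < n),
          v = Pi.single (⟨j, by omega⟩ : Fin n) (1 : ℤ) -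
            Pi.single (⟨j + 2, h⟩ : Fin n) (1 : ℤ)} ∪
       {Pi.single (⟨n - 2, by omega⟩ : Fin n) (1 : ℤ),
        (2 : ℤ) • Pi.single (⟨n - 1, by omega⟩ : Fin n) (1 : ℤ)})) :
    Pi.single (⟨1, by omega⟩ : Fin n) (1 : ℤ) ∉ L ∧
    (2 : ℤ) • Pi.single (⟨0, by omega⟩ : Fin n) (1 : ℤ) ∈ L := by
  obtain ⟨m, hm⟩ := heven
  constructor
  · -- e_1 ∉ L : use oddSumHom
    intro hmem
    have hker : L ≤ (oddSumHom n).ker := by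
      rw [hL, AddSubgroup.closure_le]
      rintro v (⟨j, hj, rfl⟩ | hv)
      · simp only [SetLike.mem_coe, AddMonoidHom.mem_ker, map_sub, oddSumHom_single]
        have : j % 2 = (j + 2) % 2 := by omega
        rw [this]
        ring
      · rcases hv with rfl | rfl
        · simp only [SetLike.mem_coe, AddMonoidHom.mem_ker, oddSumHom_single]
          have : ¬ ((n - 2) % 2 = 1) := by omega
          simp [this]
        · simp only [SetLike.mem_coe, AddMonoidHom.mem_ker, map_zsmul, oddSumHom_single]
          split <;> decide
    have h1 := hker hmem
    rw [AddMonoidHom.mem_ker, oddSumHom_single] at h1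
    norm_num at h1
  · -- 2e_0 ∈ L : first show e_j ∈ L for even j via descending chain
    have key : ∀ k : ℕ, ∀ j : ℕ, ∀ _ : j + 2 * k = n - 2, ∀ hjn : j < n,
        Pi.single (⟨j, hjn⟩ : Fin n) (1 : ℤ) ∈ L := by
      intro k
      induction k with
      | zero =>
        intro j hj hjn
        have hj' : j = n - 2 := by omega
        subst hj'
        rw [hL]
        exact AddSubgroup.subset_closure (Or.inr (Or.inl rfl))
      | succ k ih =>
        intro j hj _
        have hjn : j + 2 < n := by omega
        have h1 : Pi.single (⟨j, by omega⟩ : Fin n) (1 : ℤ) -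
            Pi.single (⟨j + 2, hjn⟩ : Fin n) (1 : ℤ) ∈ L := by
          rw [hL]
          exact AddSubgroup.subset_closure (Or.inl ⟨j, hjn, rfl⟩)
        have h2 : Pi.single (⟨j + 2, hjn⟩ : Fin n) (1 : ℤ) ∈ L := ih (j + 2) (by omega) (by omega)
        have := L.add_mem h1 h2
        simpa using this
    have h0 : Pi.single (⟨0, by omega⟩ : Fin n) (1 : ℤ) ∈ L := key ((n - 2) / 2) 0 (by omega) (by omega)
    simpa [two_smul] using L.add_mem h0 h0
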